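/- Let P be a scale group acting on T_{q+1}, let v be a vertex, and let V = Stab_P(v). Then there exists x ∈ P such that xVx⁻¹ is a proper subgroup of V with index [V : xVx⁻¹] = q; and for every x ∈ P with xVx⁻¹ a proper subgroup of V of index q, the union ⋃_{n∈ℤ} xⁿVx⁻ⁿ equals P^(e), the set of elliptic elements of P. -/

import Mathlib

namespace Scale

/-- A vertex of the `(q+1)`-regular tree `T_{q+1}`: a level `n ∈ ℤ` together with a
labelling `ℤ → Fin q` which vanishes above the level and for all sufficiently small indices. -/
@[ext] structure Vertex (q : ℕ) where
  level : ℤ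
  lab : ℤ → Fin q
  zero_gt : ∀ i : ℤ, level < i → (lab i : ℕ) = 0
  bdd : ∃ N : ℤ, ∀ i : ℤ, i < N → (lab i : ℕ) = 0

namespace Vertex

variable {q : ℕ} [NeZero q]

/-- The parent `v⁺` of a vertex. -/
def parent (v : Vertex q) : Vertex q where
  level := v.level - 1
  lab := fun i => if v.level - 1 < i then 0 else v.lab i
  zero_gt := by intro i hi; simp [hi]
  bdd := by
    obtain ⟨N, hN⟩ := v.bdd
    refine ⟨N, fun i hi => ?_⟩
    by_cases h : v.level - 1 < i
    · simp [h]
    · simp [h, hN i hi]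

/-- The child `vj` of a vertex `v`. -/
def child (v : Vertex q) (j : Fin q) : Vertex q where
  level := v.level + 1
  lab := fun i => if i = v.level + 1 then j else v.lab i
  zero_gt := by
    intro i hi
    have h1 : i ≠ v.level + 1 := by omega
    simp [h1, v.zero_gt i (by omega)]
  bdd := by
    obtain ⟨N, hN⟩ := v.bdd
    refine ⟨min N (v.level + 1), fun i hi => ?_⟩
    have h1 : i < N := lt_of_lt_of_le hi (min_le_left _ _)
    have h2 : i < v.level + 1 := lt_of_lt_of_le hi (min_le_right _ _)
    have h3 : i ≠ v.level + 1 := by omega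
    simp [h3, hN i h1]

/-- The restriction `w|_m` of a vertex to level `m`. -/
def trunc (v : Vertex q) (m : ℤ) : Vertex q where
  level := m
  lab := fun i => if m < i then 0 else v.lab i
  zero_gt := by intro i hi; simp [hi]
  bdd := by
    obtain ⟨N, hN⟩ := v.bdd
    refine ⟨N, fun i hi => ?_⟩
    by_cases h : m < i
    · simp [h]
    · simp [h, hN i hi]

/-- `w` is a descendant of `u` (in the rooted subtree `T_u`). -/
def Descendant (u w : Vertex q) : Prop := u.level ≤ w.level ∧ trunc w u.level = u

end Vertex

/-- The all-zero vertex `ṽ_n` at level `n`. -/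
def zeroVtx (q : ℕ) [NeZero q] (n : ℤ) : Vertex q where
  level := n
  lab := fun _ => 0
  zero_gt := by intro i _; simp
  bdd := ⟨0, by intro i _; simp⟩

/-- The map shifting all labels by `k` (a translation towards the end `ω` when `k > 0`). -/
def shiftMap {q : ℕ} (k : ℤ) (v : Vertex q) : Vertex q where
  level := v.level + k
  lab := fun i => v.lab (i - k)
  zero_gt := fun i hi => v.zero_gt (i - k) (by omega)
  bdd := by
    obtain ⟨N, hN⟩ := v.bdd
    exact ⟨N + k, fun i hi => hN (i - k) (by omega)⟩

/-- The translation `x̃₀ᵏ` of `T_{q+1}` as a permutation of the vertices. -/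
def shiftPerm (q : ℕ) (k : ℤ) : Equiv.Perm (Vertex q) where
  toFun := shiftMap k
  invFun := shiftMap (-k)
  left_inv := by
    intro v
    refine Vertex.ext ?_ ?_
    · show v.level + k + -k = v.level
      omega
    · funext i
      show v.lab (i - -k - k) = v.lab i
      congr 1
      omega
  right_inv := by
    intro v
    refine Vertex.ext ?_ ?_
    · show v.level + -k + k = v.level
      omega
    · funext i
      show v.lab (i - k - -k) = v.lab i
      congr 1
      omega

/-- The group `Isom(T_{q+1})_ω` of tree automorphisms fixing the distinguished end `ω`,
realised as the subgroup of permutations of the vertex set commuting with `parent`. -/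
def IsomOmega (q : ℕ) [NeZero q] : Subgroup (Equiv.Perm (Vertex q)) where
  carrier := {x | ∀ v : Vertex q, x (Vertex.parent v) = Vertex.parent (x v)}
  one_mem' := fun _ => rfl
  mul_mem' := by
    intro a b ha hb v
    show (a * b) (Vertex.parent v) = Vertex.parent ((a * b) v)
    rw [Equiv.Perm.mul_apply, Equiv.Perm.mul_apply, hb, ha]
  inv_mem' := by
    intro a ha v
    show a⁻¹ (Vertex.parent v) = Vertex.parent (a⁻¹ v)
    have h := ha (a⁻¹ v)
    rw [(show ∀ x, a (a⁻¹ x) = x from fun x => Equiv.apply_symm_apply a x)] at h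
    rw [← h, (show ∀ x, a⁻¹ (a x) = x from fun x => Equiv.symm_apply_apply a x)]

/-- The level shift `n(x)` of an automorphism (evaluated at the zero vertex; for members
of `IsomOmega q` the shift is the same at every vertex). -/
def lshift {q : ℕ} [NeZero q] (x : Equiv.Perm (Vertex q)) : ℤ := (x (zeroVtx q 0)).level

/-- An automorphism is elliptic if it fixes a vertex. -/
def Elliptic {q : ℕ} (x : Equiv.Perm (Vertex q)) : Prop := ∃ v : Vertex q, x v = v

/-- Topology of pointwise convergence on `X → X` for `X` discrete. -/
def funTop (X : Type*) : TopologicalSpace (X → X) :=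
  @Pi.topologicalSpace X (fun _ => X) (fun _ => ⊥)

/-- The permutation topology on `Equiv.Perm X`: pointwise stabilisers of finite sets of
points form a neighbourhood basis of the identity. -/
def permTop (X : Type*) : TopologicalSpace (Equiv.Perm X) :=
  @TopologicalSpace.induced (Equiv.Perm X) ((X → X) × (X → X))
    (fun g => ((g : X → X), ((g⁻¹ : Equiv.Perm X) : X → X)))
    (@instTopologicalSpaceProd _ _ (funTop X) (funTop X))

instance (q : ℕ) : TopologicalSpace (Equiv.Perm (Vertex q)) := permTop _

instance (q : ℕ) : TopologicalSpace (Equiv.Perm (List (Fin q))) := permTop _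

/-- A scale group: a closed subgroup of `Isom(T_{q+1})_ω` acting transitively on vertices. -/
def IsScaleGroup {q : ℕ} [NeZero q] (P : Subgroup (Equiv.Perm (Vertex q))) : Prop :=
  P ≤ IsomOmega q ∧ IsClosed (P : Set (Equiv.Perm (Vertex q))) ∧
    ∀ v w : Vertex q, ∃ x ∈ P, x v = w

/-- The stabiliser of the vertex `v` in `P`, as a subgroup of the ambient permutation group. -/
def stabIn {q : ℕ} (P : Subgroup (Equiv.Perm (Vertex q))) (v : Vertex q) :
    Subgroup (Equiv.Perm (Vertex q)) where
  carrier := {g | g ∈ P ∧ g v = v}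
  one_mem' := ⟨P.one_mem, rfl⟩
  mul_mem' := by
    intro a b ha hb
    exact ⟨P.mul_mem ha.1 hb.1, by rw [Equiv.Perm.mul_apply, hb.2, ha.2]⟩
  inv_mem' := by
    intro a ha
    refine ⟨P.inv_mem ha.1, ?_⟩
    rw [Equiv.Perm.inv_eq_iff_eq]
    exact ha.2.symm

/-- The conjugate subgroup `xVx⁻¹`. -/
def conjSub {G : Type*} [Group G] (x : G) (V : Subgroup G) : Subgroup G :=
  V.map (MulAut.conj x).toMonoidHom

/-- The vertex `ξ|_m` on the ray towards the end represented by `ξ`. -/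
def ray (q : ℕ) [NeZero q] (ξ : ℤ → Fin q) (N : ℤ) (hξ : ∀ i : ℤ, i < N → (ξ i : ℕ) = 0)
    (m : ℤ) : Vertex q where
  level := m
  lab := fun i => if m < i then 0 else ξ i
  zero_gt := by intro i hi; simp [hi]
  bdd := by
    refine ⟨N, fun i hi => ?_⟩
    by_cases h : m < i
    · simp [h]
    · simp [h, hξ i hi]

/-- The contraction group of `x` in `P`. -/
def conSet {q : ℕ} (P : Subgroup (Equiv.Perm (Vertex q))) (x : Equiv.Perm (Vertex q)) :
    Set (Equiv.Perm (Vertex q)) :=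
  {g | g ∈ P ∧ ∀ v : Vertex q, ∃ N : ℕ, ∀ n : ℕ, N ≤ n → (x ^ n * g * (x ^ n)⁻¹) v = v}


/-- `c` is a `P`-labelling of `T_{q+1}` with distinguished bi-infinite path `vp`:
each `c v` is a bijection from the directed edges out of `v` (encoded as the
neighbours of `v`) to `{0, …, q}`; the edge towards the parent is labelled `q`;
along the path `vp` the downward edges are labelled `0`; and `P` contains, for
all `u₁, u₂`, an element carrying `u₁` to `u₂` and preserving the labels on the
rooted subtree of descendants of `u₁`. -/
def IsPLabelling {q : ℕ} [NeZero q] (P : Subgroup (Equiv.Perm (Vertex q)))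
    (c : Vertex q → Vertex q → Fin (q + 1)) (vp : ℤ → Vertex q) : Prop :=
  (∀ v : Vertex q, ∀ j : Fin (q + 1),
      ∃! w : Vertex q, (Vertex.parent w = v ∨ w = Vertex.parent v) ∧ c v w = j) ∧
  (∀ v : Vertex q, (c v (Vertex.parent v) : ℕ) = q) ∧
  (∀ n : ℤ, Vertex.parent (vp (n + 1)) = vp n) ∧
  (∀ n : ℤ, (c (vp n) (vp (n + 1)) : ℕ) = 0) ∧
  (∀ u₁ u₂ : Vertex q, ∃ x, x ∈ P ∧ x u₁ = u₂ ∧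
    ∀ w w' : Vertex q, Vertex.Descendant u₁ w → Vertex.Descendant u₁ w' →
      (Vertex.parent w = w' ∨ Vertex.parent w' = w) → c (x w) (x w') = c w w')

open Classical in
/-- The standard labelling of `T_{q+1}`: the edge from `v` to its child `vj` is
labelled `j` and the edge towards the parent is labelled `q`. -/
noncomputable def stdLabel (q : ℕ) [NeZero q] : Vertex q → Vertex q → Fin (q + 1) :=
  fun v w =>
    if Vertex.parent w = v then Fin.castLE (Nat.le_succ q) (w.lab (v.level + 1))
    else Fin.last q

/-- Convert an edge label in `{0,…,q}` known to be `< q` into a letter in `{0,…,q-1}`. -/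
def toFinQ {q : ℕ} [NeZero q] (j : Fin (q + 1)) : Fin q :=
  if h : (j : ℕ) < q then ⟨j, h⟩ else ⟨0, Nat.pos_of_ne_zero (NeZero.ne q)⟩

/-- The string of labels read along the downward path of length `d` ending at `w`. -/
def labelString {q : ℕ} [NeZero q] (c : Vertex q → Vertex q → Fin (q + 1)) :
    Vertex q → ℕ → List (Fin q)
  | _, 0 => []
  | w, (d + 1) => labelString c (Vertex.parent w) d ++ [toFinQ (c (Vertex.parent w) w)]

/-- The isomorphism `φ^c_v : T_v → T_{q,q}` given by a labelling `c`: a descendant `w`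
of `v` is sent to the string of labels along the path from `v` down to `w`. -/
def phiStr {q : ℕ} [NeZero q] (c : Vertex q → Vertex q → Fin (q + 1)) (v w : Vertex q) :
    List (Fin q) :=
  labelString c w ((w.level - v.level).toNat)

/-- The set `P|_v = {φ^c_{x(v)} ∘ x ∘ (φ^c_v)⁻¹ : x ∈ P}` of sections of elements of `P`
at the vertex `v`, with respect to the labelling `c`. -/
def sectSet {q : ℕ} [NeZero q] (P : Subgroup (Equiv.Perm (Vertex q)))
    (c : Vertex q → Vertex q → Fin (q + 1)) (v : Vertex q) :
    Set (Equiv.Perm (List (Fin q))) :=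
  {g | ∃ x, x ∈ P ∧ ∀ w : Vertex q, Vertex.Descendant v w →
        g (phiStr c v w) = phiStr c (x v) (x w)}

/-- The standard isomorphism `φ_v : T_v → T_{q,q}`: a descendant `w` of `v` of level `m`
is sent to the string `(w_{n+1}, …, w_m)` where `n` is the level of `v`. -/
def stdStr {q : ℕ} (v w : Vertex q) : List (Fin q) :=
  (List.range (w.level - v.level).toNat).map fun k => w.lab (v.level + 1 + k)

/-- The set `{φ_{x(v)} ∘ x ∘ φ_v⁻¹ : x ∈ P}` with respect to the standard isomorphisms. -/
def stdSect {q : ℕ} [NeZero q] (P : Subgroup (Equiv.Perm (Vertex q))) (v : Vertex q) :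
    Set (Equiv.Perm (List (Fin q))) :=
  {g | ∃ x, x ∈ P ∧ ∀ w : Vertex q, Vertex.Descendant v w →
        g (stdStr v w) = stdStr (x v) (x w)}

/-- `Isom(T_{q,q})`: the group of permutations of the set of finite strings over
`{0,…,q-1}` preserving length and the prefix relation. -/
def RIsom (q : ℕ) : Subgroup (Equiv.Perm (List (Fin q))) where
  carrier := {g | (∀ l : List (Fin q), (g l).length = l.length) ∧
    ∀ l₁ l₂ : List (Fin q), l₁ <+: l₂ → g l₁ <+: g l₂}
  one_mem' := ⟨fun _ => rfl, fun _ _ h => h⟩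
  mul_mem' := by
    intro a b ha hb
    constructor
    · intro l
      rw [Equiv.Perm.mul_apply, ha.1, hb.1]
    · intro l₁ l₂ h
      rw [Equiv.Perm.mul_apply, Equiv.Perm.mul_apply]
      exact ha.2 _ _ (hb.2 _ _ h)
  inv_mem' := by
    intro a ha
    have hlen : ∀ l : List (Fin q), (a⁻¹ l).length = l.length := by
      intro l
      have h := ha.1 (a⁻¹ l)
      rw [(show ∀ x, a (a⁻¹ x) = x from fun x => Equiv.apply_symm_apply a x)] at h
      exact h.symm
    refine ⟨hlen, ?_⟩
    intro l₁ l₂ h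
    have htake : List.take (a⁻¹ l₁).length (a⁻¹ l₂) <+: a⁻¹ l₂ := List.take_prefix _ _
    have h2 : a (List.take (a⁻¹ l₁).length (a⁻¹ l₂)) <+: a (a⁻¹ l₂) := ha.2 _ _ htake
    rw [(show ∀ x, a (a⁻¹ x) = x from fun x => Equiv.apply_symm_apply a x)] at h2
    have hle : l₁.length ≤ l₂.length := h.length_le
    have hlen3 : (a (List.take (a⁻¹ l₁).length (a⁻¹ l₂))).length = l₁.length := by
      rw [ha.1, List.length_take, hlen, hlen]
      omega
    have hpre : a (List.take (a⁻¹ l₁).length (a⁻¹ l₂)) <+: l₁ :=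
      List.prefix_of_prefix_length_le h2 h (le_of_eq hlen3)
    have heq : a (List.take (a⁻¹ l₁).length (a⁻¹ l₂)) = l₁ := hpre.eq_of_length hlen3
    have heq2 : List.take (a⁻¹ l₁).length (a⁻¹ l₂) = a⁻¹ l₁ := by
      apply a.injective
      rw [heq, (show ∀ x, a (a⁻¹ x) = x from fun x => Equiv.apply_symm_apply a x)]
    rw [← heq2]
    exact List.take_prefix _ _

/-- A subgroup of `Isom(T_{q,q})` is self-replicating if it is self-similar, transitive
on level 1, and all the section homomorphisms `g ↦ g|_w` are surjective. -/
def SelfReplicating {q : ℕ} (G : Subgroup (Equiv.Perm (List (Fin q)))) : Prop :=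
  (∀ w : List (Fin q), ∀ g, g ∈ G → g w = w →
      ∃ g', g' ∈ G ∧ ∀ v : List (Fin q), g (w ++ v) = w ++ g' v) ∧
  (∀ j j' : Fin q, ∃ g ∈ G, g [j] = [j']) ∧
  (∀ w : List (Fin q), ∀ g', g' ∈ G →
      ∃ g, g ∈ G ∧ g w = w ∧ ∀ v : List (Fin q), g (w ++ v) = w ++ g' v)

/-- The stabiliser of the string `w` in `G ≤ Isom(T_{q,q})`, as a subgroup of `G`. -/
def rstab {q : ℕ} (G : Subgroup (Equiv.Perm (List (Fin q)))) (w : List (Fin q)) :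
    Subgroup G where
  carrier := {g | (g : Equiv.Perm (List (Fin q))) w = w}
  one_mem' := rfl
  mul_mem' := by
    intro a b ha hb
    show ((a * b : G) : Equiv.Perm (List (Fin q))) w = w
    rw [Subgroup.coe_mul, Equiv.Perm.mul_apply]
    rw [show (b : Equiv.Perm (List (Fin q))) w = w from hb,
      show (a : Equiv.Perm (List (Fin q))) w = w from ha]
  inv_mem' := by
    intro a ha
    show ((a⁻¹ : G) : Equiv.Perm (List (Fin q))) w = w
    rw [Subgroup.coe_inv, Equiv.Perm.inv_eq_iff_eq]
    exact (show (a : Equiv.Perm (List (Fin q))) w = w from ha).symm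


end Scale

/-!
For `z` a descendant of `b` at distance `t`, the stabiliser of `b` in `P` acts transitively on
the `q ^ t` such descendants, so `[Stab b : Stab z] = q ^ t`. Everything else comes from
counting the orbit of a pair of points in two ways:
`[H : H_a] [H_a : H_a ∩ H_c] = [H : H_c] [H_c : H_a ∩ H_c]`.

With `H` the stabiliser of a deep common ancestor of `v` and `xv`, the hypothesis that
`Stab(xv) ≤ Stab v` has index `q` shows that `x` raises levels by one. So `x` translates a deep
ancestor `b` of `v`, at distance `D` from `v`, along the axis `b, xb, x²b, …`. The index `α R`
of `Stab(xᴿb) ∩ Stab v` in `Stab(xᴿb)` is non-increasing in `R`, hence `α (R + D) = α R` for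
some `R`. Two pair counts in `Stab(xᴿb)`, first with `x^(R+D) b` and then with `xᴿv`, give
`α R = 1`, i.e. `Stab(xᴿb) ≤ Stab v`. An elliptic element fixes every ancestor of a fixed
vertex, in particular such a `b`, so its conjugate by `xᴿ` lies in `Stab v`.
-/

namespace Scale

open Equiv MulAction

section Orbits

variable {G X : Type*} [Group G] [MulAction G X]

lemma relIndex_mul_relIndex_inf_comm (A B H : Subgroup G) :
    A.relIndex H * B.relIndex (H ⊓ A) = B.relIndex H * A.relIndex (H ⊓ B) := by
  rw [mul_comm, inf_comm H, Subgroup.relIndex_inf_mul_relIndex, mul_comm, inf_comm H,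
    Subgroup.relIndex_inf_mul_relIndex, inf_comm]

lemma relIndex_stabilizer (H : Subgroup G) (a : X) :
    (stabilizer G a).relIndex H = (orbit H a).ncard := by
  rw [Subgroup.relIndex, ← index_stabilizer]
  rfl

lemma orbit_subset_orbit_of_le {H K : Subgroup G} (h : K ≤ H) (a : X) :
    orbit K a ⊆ orbit H a := by
  rintro _ ⟨g, rfl⟩
  exact ⟨⟨g, h g.2⟩, rfl⟩

lemma mem_orbit_subgroup_iff {α : Type*} {H : Subgroup (Perm α)} {a y : α} :
    y ∈ orbit H a ↔ ∃ g ∈ H, g a = y := by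
  simp [mem_orbit_iff, Subgroup.smul_def, Perm.smul_def]

end Orbits

section Stabilizers

variable {q : ℕ} {P : Subgroup (Perm (Vertex q))}

lemma stabIn_le (P : Subgroup (Perm (Vertex q))) (v : Vertex q) : stabIn P v ≤ P :=
  fun _ hg => hg.1

lemma relIndex_stabIn {K : Subgroup (Perm (Vertex q))} (hK : K ≤ P) (u : Vertex q) :
    (stabIn P u).relIndex K = (orbit K u).ncard := by
  have : stabIn P u ⊓ K = stabilizer (Perm (Vertex q)) u ⊓ K := by
    ext g
    simp only [Subgroup.mem_inf, mem_stabilizer_iff, Perm.smul_def]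
    exact ⟨fun h => ⟨h.1.2, h.2⟩, fun h => ⟨⟨hK h.2, h.1⟩, h.2⟩⟩
  rw [← Subgroup.inf_relIndex_right, this, Subgroup.inf_relIndex_right, relIndex_stabilizer]

lemma conjSub_stabIn {x : Perm (Vertex q)} (hx : x ∈ P) (v : Vertex q) :
    conjSub x (stabIn P v) = stabIn P (x v) := by
  ext g
  constructor
  · rintro ⟨h, ⟨hP, hv⟩, rfl⟩
    refine ⟨P.mul_mem (P.mul_mem hx hP) (P.inv_mem hx), ?_⟩
    simp [MulAut.conj_apply, Perm.mul_apply, hv]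
  · rintro ⟨hP, hv⟩
    refine ⟨x⁻¹ * g * x, ⟨P.mul_mem (P.mul_mem (P.inv_mem hx) hP) hx, ?_⟩,
      by simp [mul_assoc]⟩
    simp [Perm.mul_apply, hv]

lemma stabIn_pow_apply_le {x : Perm (Vertex q)} (hx : x ∈ P) {v : Vertex q}
    (hle : stabIn P (x v) ≤ stabIn P v) (n : ℕ) : stabIn P ((x ^ n) v) ≤ stabIn P v := by
  induction n with
  | zero => simp
  | succ n ih =>
    calc stabIn P ((x ^ (n + 1)) v) = conjSub (x ^ n) (stabIn P (x v)) := by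
          rw [conjSub_stabIn (P.pow_mem hx n), pow_succ, Perm.mul_apply]
      _ ≤ conjSub (x ^ n) (stabIn P v) := Subgroup.map_mono hle
      _ = stabIn P ((x ^ n) v) := conjSub_stabIn (P.pow_mem hx n) v
      _ ≤ stabIn P v := ih

lemma mem_stabIn_zpow_apply_of_conj_mem {x g : Perm (Vertex q)} (hx : x ∈ P) {v : Vertex q}
    {n : ℤ} (h : (x ^ n)⁻¹ * g * x ^ n ∈ stabIn P v) : g ∈ stabIn P ((x ^ n) v) := by
  rw [← conjSub_stabIn (P.zpow_mem hx n)]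
  exact ⟨_, h, (MulAut.conj_apply _ _).trans (by group)⟩

end Stabilizers

variable {q : ℕ} [NeZero q]

namespace Vertex

lemma lab_eq_zero {v : Vertex q} {i : ℤ} (h : v.level < i) : v.lab i = 0 :=
  Fin.ext (v.zero_gt i h)

lemma trunc_lab (v : Vertex q) (m i : ℤ) :
    (trunc v m).lab i = if m < i then 0 else v.lab i := rfl

@[simp] lemma trunc_level (v : Vertex q) (m : ℤ) : (trunc v m).level = m := rfl

lemma trunc_self (v : Vertex q) : trunc v v.level = v := by
  refine Vertex.ext rfl (funext fun i => ?_)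
  rw [trunc_lab]
  split_ifs with h
  · exact (lab_eq_zero h).symm
  · rfl

lemma trunc_trunc (v : Vertex q) {m m' : ℤ} (h : m' ≤ m) :
    trunc (trunc v m) m' = trunc v m' := by
  refine Vertex.ext rfl (funext fun i => ?_)
  simp only [trunc_lab]
  split_ifs <;> first | rfl | omega

lemma parent_trunc (v : Vertex q) (m : ℤ) : parent (trunc v m) = trunc v (m - 1) := by
  refine Vertex.ext rfl (funext fun i => ?_)
  show (if m - 1 < i then 0 else (trunc v m).lab i) = _
  simp only [trunc_lab]
  split_ifs <;> first | rfl | omega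

lemma trunc_zeroVtx (n m : ℤ) : trunc (zeroVtx q n) m = zeroVtx q m := by
  refine Vertex.ext rfl (funext fun i => ?_)
  rw [trunc_lab]
  split_ifs <;> rfl

lemma exists_trunc_eq_zeroVtx (v : Vertex q) : ∃ M, ∀ m ≤ M, trunc v m = zeroVtx q m := by
  obtain ⟨N, hN⟩ := v.bdd
  refine ⟨N - 1, fun m hm => Vertex.ext rfl (funext fun i => ?_)⟩
  rw [trunc_lab]
  split_ifs with h
  · rfl
  · exact Fin.ext (hN i (by omega))

end Vertex

open Vertex

def descendantsAt (b : Vertex q) (t : ℕ) : Set (Vertex q) :=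
  {z | z.level = b.level + t ∧ trunc z b.level = b}

section Descendants

variable {b z y : Vertex q} {s t : ℕ}

lemma self_mem_descendantsAt (b : Vertex q) : b ∈ descendantsAt b 0 :=
  ⟨by simp, trunc_self b⟩

lemma zeroVtx_mem_descendantsAt (m : ℤ) (t : ℕ) :
    zeroVtx q (m + t) ∈ descendantsAt (zeroVtx q m) t :=
  ⟨rfl, trunc_zeroVtx _ _⟩

lemma exists_mem_descendantsAt_zeroVtx (v : Vertex q) :
    ∃ M, ∀ m ≤ M, v ∈ descendantsAt (zeroVtx q m) (v.level - m).toNat := by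
  obtain ⟨M, hM⟩ := exists_trunc_eq_zeroVtx v
  exact ⟨min M v.level, fun m hm =>
    ⟨by simp only [zeroVtx]; omega, hM m (by omega)⟩⟩

lemma mem_descendantsAt_trans (hz : z ∈ descendantsAt b s) (hy : y ∈ descendantsAt z t) :
    y ∈ descendantsAt b (s + t) := by
  refine ⟨by rw [hy.1, hz.1]; push_cast; ring, ?_⟩
  rw [← trunc_trunc y (m := z.level) (by rw [hz.1]; omega), hy.2, hz.2]

lemma exists_mem_descendantsAt_of_mem_add (hz : z ∈ descendantsAt b (s + t)) :
    ∃ p ∈ descendantsAt b s, z ∈ descendantsAt p t := by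
  refine ⟨trunc z (b.level + s), ⟨rfl, ?_⟩, ⟨?_, rfl⟩⟩
  · rw [trunc_trunc _ (by omega), hz.2]
  · rw [hz.1, trunc_level]; push_cast; ring

lemma eq_of_mem_descendantsAt {b' : Vertex q} (hb : z ∈ descendantsAt b t)
    (hb' : z ∈ descendantsAt b' t) : b = b' := by
  have hlevel : b.level = b'.level := by have := hb.1; have := hb'.1; omega
  rw [← hb.2, ← hb'.2, hlevel]

-- `s j` is the label at level `b.level + 1 + j`.
def extendLabels (b : Vertex q) (t : ℕ) (s : Fin t → Fin q) : Vertex q where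
  level := b.level + t
  lab i :=
    if h : b.level < i ∧ i ≤ b.level + t then s ⟨(i - b.level - 1).toNat, by omega⟩
    else b.lab i
  zero_gt i hi := by
    rw [dif_neg (by omega)]
    exact b.zero_gt i (by omega)
  bdd := by
    obtain ⟨N, hN⟩ := b.bdd
    exact ⟨min N (b.level + 1), fun i hi => by rw [dif_neg (by omega)]; exact hN i (by omega)⟩

lemma extendLabels_mem_descendantsAt (b : Vertex q) (t : ℕ) (s : Fin t → Fin q) :
    extendLabels b t s ∈ descendantsAt b t := by
  refine ⟨rfl, Vertex.ext rfl (funext fun i => ?_)⟩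
  rw [trunc_lab]
  split_ifs with h
  · exact (lab_eq_zero h).symm
  · exact dif_neg (by omega)

def descendantsAtEquiv (b : Vertex q) (t : ℕ) : descendantsAt b t ≃ (Fin t → Fin q) where
  toFun z i := (z : Vertex q).lab (b.level + 1 + i)
  invFun s := ⟨extendLabels b t s, extendLabels_mem_descendantsAt b t s⟩
  left_inv := by
    rintro ⟨z, hz⟩
    refine Subtype.ext (Vertex.ext hz.1.symm (funext fun i => ?_))
    show dite _ _ _ = z.lab i
    split_ifs with h
    · show z.lab (b.level + 1 + ((i - b.level - 1).toNat : ℕ)) = z.lab i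
      congr 1; omega
    · by_cases hi : i ≤ b.level
      · conv_lhs => rw [← hz.2]
        rw [trunc_lab, if_neg (by omega)]
      · rw [lab_eq_zero (by omega), lab_eq_zero (by rw [hz.1]; omega)]
  right_inv s := by
    funext i
    show dite _ _ _ = _
    rw [dif_pos ⟨by omega, by omega⟩]
    congr 1
    ext
    simp only
    omega

lemma finite_descendantsAt (b : Vertex q) (t : ℕ) : (descendantsAt b t).Finite :=
  Set.finite_coe_iff.1 (Finite.of_equiv _ (descendantsAtEquiv b t).symm)

lemma ncard_descendantsAt (b : Vertex q) (t : ℕ) : (descendantsAt b t).ncard = q ^ t := by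
  rw [← Nat.card_coe_set_eq, Nat.card_congr (descendantsAtEquiv b t)]
  simp

end Descendants

section IsomOmega

variable {x : Perm (Vertex q)}

lemma apply_trunc (hx : x ∈ IsomOmega q) {v : Vertex q} {m : ℤ} (hm : m ≤ v.level) :
    x (trunc v m) = trunc (x v) (m + ((x v).level - v.level)) := by
  induction m, hm using Int.leInductionDown with
  | base => rw [trunc_self, add_sub_cancel, trunc_self]
  | pred n _ ih => rw [← parent_trunc, hx, ih, parent_trunc]; congr 1; ring

lemma level_apply (hx : x ∈ IsomOmega q) (v : Vertex q) :
    (x v).level = v.level + lshift x := by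
  obtain ⟨M, hM⟩ := exists_trunc_eq_zeroVtx v
  set m := min (min M v.level) 0
  -- `v` and `zeroVtx q 0` share the ancestor `zeroVtx q m`, whose image fixes both shifts.
  have hv := apply_trunc hx (v := v) (m := m) (by omega)
  have h0 := apply_trunc hx (v := zeroVtx q 0) (m := m) (by simp only [zeroVtx]; omega)
  rw [hM m (by omega)] at hv
  rw [trunc_zeroVtx] at h0
  have := congrArg Vertex.level (hv.symm.trans h0)
  simp only [trunc_level] at this
  simp only [lshift, zeroVtx] at this ⊢
  omega

lemma apply_trunc_eq (hx : x ∈ IsomOmega q) {v : Vertex q} {m : ℤ} (hm : m ≤ v.level) :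
    x (trunc v m) = trunc (x v) (m + lshift x) := by
  rw [apply_trunc hx hm, level_apply hx]; congr 1; ring

lemma exists_apply_zeroVtx (hx : x ∈ IsomOmega q) :
    ∃ M, ∀ m ≤ M, x (zeroVtx q m) = zeroVtx q (m + lshift x) := by
  obtain ⟨M, hM⟩ := exists_trunc_eq_zeroVtx (x (zeroVtx q 0))
  refine ⟨min 0 (M - lshift x), fun m hm => ?_⟩
  rw [← trunc_zeroVtx 0 m, apply_trunc_eq hx (by simp only [zeroVtx]; omega), hM _ (by omega)]

lemma apply_mem_descendantsAt (hx : x ∈ IsomOmega q) {b z : Vertex q} {t : ℕ}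
    (hz : z ∈ descendantsAt b t) : x z ∈ descendantsAt (x b) t := by
  refine ⟨by rw [level_apply hx, level_apply hx, hz.1]; ring, ?_⟩
  rw [level_apply hx, ← apply_trunc_eq hx (by rw [hz.1]; omega), hz.2]

end IsomOmega

section DescendantStabilizers

variable {P : Subgroup (Perm (Vertex q))}

lemma stabIn_le_stabIn_of_mem_descendantsAt (hPω : P ≤ IsomOmega q) {b z : Vertex q} {t : ℕ}
    (hz : z ∈ descendantsAt b t) : stabIn P z ≤ stabIn P b := by
  rintro g ⟨hg, hgz⟩
  have := apply_mem_descendantsAt (hPω hg) hz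
  rw [hgz] at this
  exact ⟨hg, (eq_of_mem_descendantsAt hz this).symm⟩

lemma exists_mem_stabIn_apply_eq (hPω : P ≤ IsomOmega q)
    (hPtr : ∀ v w : Vertex q, ∃ x ∈ P, x v = w) (b : Vertex q) {t : ℕ} :
    ∀ {z z' : Vertex q}, z ∈ descendantsAt b t → z' ∈ descendantsAt b t →
      ∃ g ∈ stabIn P b, g z = z' := by
  induction t with
  | zero =>
    intro z z' hz hz'
    obtain rfl := eq_of_mem_descendantsAt (self_mem_descendantsAt z) hz
    obtain rfl := eq_of_mem_descendantsAt (self_mem_descendantsAt z') hz'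
    exact ⟨1, (stabIn P _).one_mem, rfl⟩
  | succ t ih =>
    intro z z' hz hz'
    obtain ⟨p, hp, hzp⟩ := exists_mem_descendantsAt_of_mem_add hz
    obtain ⟨p', hp', hzp'⟩ := exists_mem_descendantsAt_of_mem_add hz'
    obtain ⟨g₁, hg₁, hg₁p⟩ := ih hp hp'
    obtain ⟨g₂, hg₂, hg₂z⟩ := hPtr (g₁ z) z'
    -- `g₂` maps a child of `p'` to a child of `p'`, so it fixes `p'` and hence `b`.
    have hchild := apply_mem_descendantsAt (hPω hg₁.1) hzp
    rw [hg₁p] at hchild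
    have hg₂p' : g₂ p' = p' := by
      have := apply_mem_descendantsAt (hPω hg₂) hchild
      rw [hg₂z] at this
      exact eq_of_mem_descendantsAt this hzp'
    have hg₂b := stabIn_le_stabIn_of_mem_descendantsAt hPω hp' ⟨hg₂, hg₂p'⟩
    exact ⟨g₂ * g₁, (stabIn P b).mul_mem hg₂b hg₁, by rw [Perm.mul_apply, hg₂z]⟩

lemma orbit_stabIn_eq_descendantsAt (hPω : P ≤ IsomOmega q)
    (hPtr : ∀ v w : Vertex q, ∃ x ∈ P, x v = w) {b z : Vertex q} {t : ℕ}
    (hz : z ∈ descendantsAt b t) : orbit (stabIn P b) z = descendantsAt b t := by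
  ext y
  rw [mem_orbit_subgroup_iff]
  constructor
  · rintro ⟨g, ⟨hg, hgb⟩, rfl⟩
    simpa [hgb] using apply_mem_descendantsAt (hPω hg) hz
  · exact exists_mem_stabIn_apply_eq hPω hPtr b hz

lemma relIndex_stabIn_of_mem_descendantsAt (hPω : P ≤ IsomOmega q)
    (hPtr : ∀ v w : Vertex q, ∃ x ∈ P, x v = w) {b z : Vertex q} {t : ℕ}
    (hz : z ∈ descendantsAt b t) : (stabIn P z).relIndex (stabIn P b) = q ^ t := by
  rw [relIndex_stabIn (stabIn_le P b), orbit_stabIn_eq_descendantsAt hPω hPtr hz,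
    ncard_descendantsAt]

lemma exists_conjSub_stabIn_lt (hq : 2 ≤ q) (hPω : P ≤ IsomOmega q)
    (hPtr : ∀ v w : Vertex q, ∃ x ∈ P, x v = w) (v : Vertex q) :
    ∃ x ∈ P, conjSub x (stabIn P v) < stabIn P v ∧
      (conjSub x (stabIn P v)).relIndex (stabIn P v) = q := by
  obtain ⟨w, hw⟩ : (descendantsAt v 1).Nonempty := Set.nonempty_of_ncard_ne_zero <| by
    rw [ncard_descendantsAt]
    exact pow_ne_zero _ (NeZero.ne q)
  obtain ⟨x, hx, rfl⟩ := hPtr v w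
  have hidx : (stabIn P (x v)).relIndex (stabIn P v) = q := by
    rw [relIndex_stabIn_of_mem_descendantsAt hPω hPtr hw, pow_one]
  refine ⟨x, hx, ?_⟩
  rw [conjSub_stabIn hx]
  refine ⟨lt_of_le_of_ne (stabIn_le_stabIn_of_mem_descendantsAt hPω hw) fun h => ?_, hidx⟩
  rw [h, Subgroup.relIndex_self] at hidx
  omega

end DescendantStabilizers

section Translations

variable {P : Subgroup (Perm (Vertex q))} {x : Perm (Vertex q)}

lemma lshift_eq_one (hq : 2 ≤ q) (hPω : P ≤ IsomOmega q)
    (hPtr : ∀ v w : Vertex q, ∃ x ∈ P, x v = w) (hx : x ∈ P) {v : Vertex q}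
    (hle : stabIn P (x v) ≤ stabIn P v) (hidx : (stabIn P (x v)).relIndex (stabIn P v) = q) :
    lshift x = 1 := by
  obtain ⟨M, hM⟩ := exists_mem_descendantsAt_zeroVtx v
  obtain ⟨M', hM'⟩ := exists_mem_descendantsAt_zeroVtx (x v)
  have hv := hM _ (min_le_left M M')
  have hxv := hM' _ (min_le_right M M')
  have hcount := relIndex_mul_relIndex_inf_comm (stabIn P v) (stabIn P (x v))
    (stabIn P (zeroVtx q (min M M')))
  rw [inf_of_le_right (stabIn_le_stabIn_of_mem_descendantsAt hPω hv),
    inf_of_le_right (stabIn_le_stabIn_of_mem_descendantsAt hPω hxv), hidx,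
    Subgroup.relIndex_eq_one.2 hle, relIndex_stabIn_of_mem_descendantsAt hPω hPtr hv,
    relIndex_stabIn_of_mem_descendantsAt hPω hPtr hxv, mul_one, ← pow_succ] at hcount
  have hexp := Nat.pow_right_injective hq hcount
  have hlevel := level_apply (hPω hx) v
  have := hv.1
  have := hxv.1
  omega

lemma pow_apply_mem_descendantsAt (hx : x ∈ IsomOmega q) {b : Vertex q}
    (hb : x b ∈ descendantsAt b 1) (k j : ℕ) :
    (x ^ (k + j)) b ∈ descendantsAt ((x ^ k) b) j := by
  induction j with
  | zero => exact self_mem_descendantsAt _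
  | succ j ih =>
    have hstep := apply_mem_descendantsAt ((IsomOmega q).pow_mem hx (k + j)) hb
    rw [← Perm.mul_apply, ← pow_succ] at hstep
    exact mem_descendantsAt_trans ih hstep

lemma relIndex_stabIn_pow_apply_ne_zero (hPω : P ≤ IsomOmega q)
    (hPtr : ∀ v w : Vertex q, ∃ x ∈ P, x v = w) (hx : x ∈ P) {v : Vertex q}
    (hle : stabIn P (x v) ≤ stabIn P v) {b : Vertex q} {D : ℕ} (hv : v ∈ descendantsAt b D)
    (k : ℕ) : (stabIn P v).relIndex (stabIn P ((x ^ k) b)) ≠ 0 := by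
  intro h
  have h' := Subgroup.relIndex_eq_zero_of_le_left (stabIn_pow_apply_le hx hle k) h
  rw [relIndex_stabIn_of_mem_descendantsAt hPω hPtr
    (apply_mem_descendantsAt (hPω (P.pow_mem hx k)) hv)] at h'
  exact pow_ne_zero _ (NeZero.ne q) h'

lemma stabIn_pow_apply_le_of_relIndex_eq (hPω : P ≤ IsomOmega q)
    (hPtr : ∀ v w : Vertex q, ∃ x ∈ P, x v = w) (hx : x ∈ P) {v : Vertex q}
    (hle : stabIn P (x v) ≤ stabIn P v) {b : Vertex q} (hb : x b ∈ descendantsAt b 1) {D : ℕ}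
    (hv : v ∈ descendantsAt b D) {R : ℕ}
    (hR : (stabIn P v).relIndex (stabIn P ((x ^ (R + D)) b)) =
      (stabIn P v).relIndex (stabIn P ((x ^ R) b))) :
    stabIn P ((x ^ R) b) ≤ stabIn P v := by
  set H := stabIn P ((x ^ R) b)
  set a := (x ^ (R + D)) b
  have ha : a ∈ descendantsAt ((x ^ R) b) D := pow_apply_mem_descendantsAt (hPω hx) hb R D
  have hw : (x ^ R) v ∈ descendantsAt ((x ^ R) b) D :=
    apply_mem_descendantsAt (hPω (P.pow_mem hx R)) hv
  have hα := relIndex_stabIn_pow_apply_ne_zero hPω hPtr hx hle hv R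
  have hHv : H ⊓ stabIn P v ≤ P := inf_le_right.trans (stabIn_le P v)
  -- Counting the pairs `(v, a)` shows that `H ⊓ stabIn P v` is transitive on the
  -- descendants of `xᴿb` at distance `D`; in particular it carries `a` to `xᴿv`.
  have hcount := relIndex_mul_relIndex_inf_comm (stabIn P v) (stabIn P a) H
  rw [inf_of_le_right (stabIn_le_stabIn_of_mem_descendantsAt hPω ha),
    relIndex_stabIn_of_mem_descendantsAt hPω hPtr ha, hR, relIndex_stabIn hHv,
    mul_comm] at hcount
  have horbit : orbit ↥(H ⊓ stabIn P v) a = descendantsAt ((x ^ R) b) D := by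
    refine Set.eq_of_subset_of_ncard_le ?_ ?_ (finite_descendantsAt _ _)
    · rw [← orbit_stabIn_eq_descendantsAt hPω hPtr ha]
      exact orbit_subset_orbit_of_le inf_le_left a
    · rw [ncard_descendantsAt, Nat.eq_of_mul_eq_mul_right (Nat.pos_of_ne_zero hα) hcount]
  -- Counting the pairs `(v, xᴿv)` now forces the orbit of `v` under `H` to be trivial.
  have hcount' := relIndex_mul_relIndex_inf_comm (stabIn P v) (stabIn P ((x ^ R) v)) H
  rw [relIndex_stabIn hHv, orbit_eq_iff.2 (horbit ▸ hw), horbit, ncard_descendantsAt,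
    relIndex_stabIn_of_mem_descendantsAt hPω hPtr hw,
    Subgroup.relIndex_eq_one.2 (inf_le_right.trans (stabIn_pow_apply_le hx hle R)),
    mul_one] at hcount'
  exact Subgroup.relIndex_eq_one.1
    (Nat.eq_of_mul_eq_mul_right (pow_pos (Nat.pos_of_ne_zero (NeZero.ne q)) D)
      (hcount'.trans (one_mul _).symm))

lemma exists_stabIn_pow_apply_le (hPω : P ≤ IsomOmega q)
    (hPtr : ∀ v w : Vertex q, ∃ x ∈ P, x v = w) (hx : x ∈ P) {v : Vertex q}
    (hle : stabIn P (x v) ≤ stabIn P v) {b : Vertex q} (hb : x b ∈ descendantsAt b 1) {D : ℕ}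
    (hv : v ∈ descendantsAt b D) : ∃ R : ℕ, stabIn P ((x ^ R) b) ≤ stabIn P v := by
  set α : ℕ → ℕ := fun k => (stabIn P v).relIndex (stabIn P ((x ^ k) b))
  have hanti : Antitone α := fun k k' hkk' => by
    obtain ⟨j, rfl⟩ := Nat.exists_eq_add_of_le hkk'
    exact Subgroup.relIndex_le_of_le_right (stabIn_le_stabIn_of_mem_descendantsAt hPω
      (pow_apply_mem_descendantsAt (hPω hx) hb k j))
      (relIndex_stabIn_pow_apply_ne_zero hPω hPtr hx hle hv k)
  obtain ⟨j, hj⟩ : ∃ j, α ((j + 1) * D) = α (j * D) := by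
    by_contra! h
    exact not_strictAnti_of_wellFoundedLT (fun j => α (j * D)) (strictAnti_nat_of_succ_lt
      fun j => (hanti (Nat.mul_le_mul_right D j.le_succ)).lt_of_ne (h j))
  exact ⟨j * D, stabIn_pow_apply_le_of_relIndex_eq hPω hPtr hx hle hb hv
    (by rwa [Nat.succ_mul] at hj)⟩

lemma exists_zpow_conj_mem_stabIn (hPω : P ≤ IsomOmega q)
    (hPtr : ∀ v w : Vertex q, ∃ x ∈ P, x v = w) (hx : x ∈ P) {v : Vertex q}
    (hle : stabIn P (x v) ≤ stabIn P v) (hshift : lshift x = 1) {g : Perm (Vertex q)}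
    (hg : g ∈ P) (hell : Elliptic g) : ∃ n : ℤ, (x ^ n)⁻¹ * g * x ^ n ∈ stabIn P v := by
  obtain ⟨z, hz⟩ := hell
  obtain ⟨Mx, hMx⟩ := exists_apply_zeroVtx (hPω hx)
  obtain ⟨Mz, hMz⟩ := exists_mem_descendantsAt_zeroVtx z
  obtain ⟨Mv, hMv⟩ := exists_mem_descendantsAt_zeroVtx v
  set m := min Mx (min Mz Mv)
  have hb : x (zeroVtx q m) ∈ descendantsAt (zeroVtx q m) 1 := by
    rw [hMx m (min_le_left _ _), hshift]
    exact_mod_cast zeroVtx_mem_descendantsAt m 1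
  have hgb : g ∈ stabIn P (zeroVtx q m) :=
    stabIn_le_stabIn_of_mem_descendantsAt hPω (hMz m (by omega)) ⟨hg, hz⟩
  obtain ⟨R, hR⟩ := exists_stabIn_pow_apply_le hPω hPtr hx hle hb (hMv m (by omega))
  refine ⟨-R, hR ?_⟩
  rw [zpow_neg, inv_inv, zpow_natCast, ← conjSub_stabIn (P.pow_mem hx R)]
  exact ⟨g, hgb, MulAut.conj_apply _ _⟩

end Translations

end Scale

open Scale in
/-- In a scale group `P`, with `V` the stabiliser of a vertex `v`, there is
`x ∈ P` with `xVx⁻¹ < V` of index `q`, and for any such `x` the union of the conjugates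
`xⁿVx⁻ⁿ` is the set of elliptic elements of `P`. -/
theorem statement_1 (q : ℕ) [NeZero q] (hq : 2 ≤ q)
    (P : Subgroup (Equiv.Perm (Vertex q))) (hP : IsScaleGroup P) (v : Vertex q) :
    (∃ x ∈ P, conjSub x (stabIn P v) < stabIn P v ∧
        (conjSub x (stabIn P v)).relIndex (stabIn P v) = q) ∧
    (∀ x ∈ P, conjSub x (stabIn P v) < stabIn P v →
      (conjSub x (stabIn P v)).relIndex (stabIn P v) = q →
      {g : Equiv.Perm (Vertex q) | ∃ n : ℤ, (x ^ n)⁻¹ * g * x ^ n ∈ stabIn P v} =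
        {g : Equiv.Perm (Vertex q) | g ∈ P ∧ Elliptic g}) := by
  obtain ⟨hPω, -, hPtr⟩ := hP
  refine ⟨exists_conjSub_stabIn_lt hq hPω hPtr v, fun x hx hlt hidx => ?_⟩
  rw [conjSub_stabIn hx] at hlt hidx
  have hshift := lshift_eq_one hq hPω hPtr hx hlt.le hidx
  ext g
  constructor
  · rintro ⟨n, hn⟩
    obtain ⟨hg, hgv⟩ := mem_stabIn_zpow_apply_of_conj_mem hx hn
    exact ⟨hg, _, hgv⟩
  · rintro ⟨hg, hell⟩
    exact exists_zpow_conj_mem_stabIn hPω hPtr hx hlt.le hshift hg hell
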